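/- Let V ⊂ ℝⁿ be open and convex, let v : V̄ → ℝ be continuous, and let L > 0. Assume that |p| ≤ L for every x ∈ V and every p ∈ D⁺v(x). Then |v(x) − v(y)| ≤ L|x − y| for all x, y ∈ V̄. -/
import Mathlib


open Set Metric Filter
open scoped Topology NNReal InnerProductSpace

noncomputable section

abbrev En (n : ℕ) := EuclideanSpace ℝ (Fin n)

/-- The superdifferential `D⁺_V φ(x)` of `φ` at `x` relative to the set `V`. -/
def supDiff {n : ℕ} (V : Set (En n)) (φ : En n → ℝ) (x : En n) : Set (En n) :=
  {p | ∀ ε > 0, ∃ δ > 0, ∀ y ∈ V, ‖y - x‖ < δ →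
      φ y ≤ φ x + ⟪p, y - x⟫_ℝ + ε * ‖y - x‖}

lemma sqrt_sub_le_aux (A B : ℝ) (hA : 0 ≤ A) (hB : 0 < B) :
    Real.sqrt A - Real.sqrt B ≤ (A - B) / (2 * Real.sqrt B) := by
  have hsB : 0 < Real.sqrt B := Real.sqrt_pos.2 hB
  rw [le_div_iff₀ (by positivity)]
  nlinarith [sq_nonneg (Real.sqrt A - Real.sqrt B), Real.sq_sqrt hA, Real.sq_sqrt hB.le]

set_option maxHeartbeats 1000000 in
lemma local_est {n : ℕ} {V : Set (En n)} (hVo : IsOpen V)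
    {v : En n → ℝ} (hv : ContinuousOn v (closure V))
    {L : ℝ} (hL : 0 < L)
    (hbound : ∀ x ∈ V, ∀ p ∈ supDiff V v x, ‖p‖ ≤ L)
    {z : En n} (hz : z ∈ V) {ε : ℝ} (hε : 0 < ε) :
    ∃ ρ > 0, ∀ w ∈ V, ‖w - z‖ ≤ ρ → v w ≤ v z + (L + ε) * ‖w - z‖ := by
  obtain ⟨r0, hr0, hball0⟩ := Metric.isOpen_iff.1 hVo z hz
  set r : ℝ := r0/2 with hr_def
  have hr : 0 < r := by positivity
  set K := closedBall z r with hK_def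
  have hKV : K ⊆ V := (closedBall_subset_ball (by rw [hr_def]; linarith)).trans hball0
  have hKcl : K ⊆ closure V := hKV.trans subset_closure
  have hcont : ContinuousOn v K := hv.mono hKcl
  have hzK : z ∈ K := mem_closedBall_self hr.le
  have hKne : K.Nonempty := ⟨z, hzK⟩
  obtain ⟨u0, hu0K, hu0max⟩ := (isCompact_closedBall z r).exists_isMaxOn hKne hcont
  set η := v u0 - v z with hη_def
  have hη0 : 0 ≤ η := sub_nonneg.2 (hu0max hzK)
  have hη : ∀ u ∈ K, v u ≤ v z + η := by
    intro u hu
    have h := hu0max hu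
    simp only [Set.mem_setOf_eq] at h
    simp only [hη_def]
    linarith
  set ε' := ε/2 with hε'_def
  have hε' : 0 < ε' := by positivity
  set M := (η+1)/r^2 with hM_def
  have hM : 0 < M := by positivity
  set c := L / Real.sqrt (2*L*ε' + ε'^2) with hc_def
  have hc0 : 0 ≤ c := by positivity
  have key : ∀ δ : ℝ, 0 < δ → δ ≤ r → ∃ w', w' ∈ V ∧ ‖w' - z‖ ≤ c*δ ∧
      ∀ w ∈ K, v w ≤ v w' + (L+ε')*(Real.sqrt (‖w-z‖^2+δ^2) - δ) + M*‖w-z‖^2 := by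
    intro δ hδ hδr
    have hφcont : ContinuousOn
        (fun u => v u - (L+ε')*Real.sqrt (‖u-z‖^2+δ^2) - M*‖u-z‖^2) K := by
      refine (hcont.sub ?_).sub ?_
      · exact (continuous_const.mul (Real.continuous_sqrt.comp
          ((((continuous_id.sub continuous_const).norm.pow 2)).add continuous_const))).continuousOn
      · exact (continuous_const.mul ((continuous_id.sub continuous_const).norm.pow 2)).continuousOn
    obtain ⟨ws, hwK, hwmax⟩ := (isCompact_closedBall z r).exists_isMaxOn hKne hφcont
    rw [← hK_def] at hwmax
    set s := ‖ws - z‖ with hs_def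
    have hs0 : 0 ≤ s := norm_nonneg _
    set G := Real.sqrt (s^2 + δ^2) with hG_def
    have hGδ : δ ≤ G := by
      have h := Real.sqrt_le_sqrt (show δ^2 ≤ s^2+δ^2 by nlinarith)
      rwa [Real.sqrt_sq hδ.le] at h
    have hGpos : 0 < G := lt_of_lt_of_le hδ hGδ
    have hLε : (0:ℝ) < L + ε' := by linarith
    have hφz : v z - (L+ε')*Real.sqrt (‖z-z‖^2+δ^2) - M*‖z-z‖^2 = v z - (L+ε')*δ := by
      simp [Real.sqrt_sq hδ.le]
    have hzs := hwmax hzK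
    simp only [Set.mem_setOf_eq] at hzs
    rw [hφz, ← hs_def, ← hG_def] at hzs
    -- hzs : v z - (L+ε')*δ ≤ v ws - (L+ε')*G - M*s^2
    have hsr : s < r := by
      have h1 : v ws ≤ v z + η := hη ws hwK
      have h3 : M * s^2 ≤ η := by
        have h2 := mul_le_mul_of_nonneg_left hGδ hLε.le
        linarith
      have h4 : (η+1)*s^2 ≤ η*r^2 := by
        rw [hM_def, div_mul_eq_mul_div, div_le_iff₀ (by positivity)] at h3
        linarith
      have h5 : s^2 < r^2 := by nlinarith [h4, hη0, mul_pos hr hr]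
      calc s = Real.sqrt (s^2) := (Real.sqrt_sq hs0).symm
        _ < Real.sqrt (r^2) := Real.sqrt_lt_sqrt (sq_nonneg s) h5
        _ = r := Real.sqrt_sq hr.le
    set D := (L+ε')/(2*G) with hD_def
    have hD : 0 < D := by positivity
    set C := D + M with hC_def
    have hC : 0 < C := by positivity
    have hkey2 : ∀ y ∈ K, v y ≤ v ws + (2*C)*⟪ws - z, y - ws⟫_ℝ + C*‖y - ws‖^2 := by
      intro y hy
      have hmax := hwmax hy
      simp only [Set.mem_setOf_eq] at hmax
      rw [← hs_def, ← hG_def] at hmax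
      have hexp : ‖y - z‖^2 = s^2 + 2*⟪ws - z, y - ws⟫_ℝ + ‖y - ws‖^2 := by
        have h := norm_add_sq_real (ws - z) (y - ws)
        rw [show ws - z + (y - ws) = y - z by abel] at h
        rw [h, hs_def]
      have hsq : Real.sqrt (‖y-z‖^2 + δ^2) - G ≤ (‖y-z‖^2 - s^2)/(2*G) := by
        have h := sqrt_sub_le_aux (‖y-z‖^2+δ^2) (s^2+δ^2) (by positivity) (by positivity)
        rw [← hG_def] at h
        convert h using 2
        ring
      have h5 : (L+ε')*(Real.sqrt (‖y-z‖^2+δ^2) - G) ≤ D*(‖y-z‖^2 - s^2) := by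
        have := mul_le_mul_of_nonneg_left hsq hLε.le
        calc (L+ε')*(Real.sqrt (‖y-z‖^2+δ^2) - G) ≤ (L+ε')*((‖y-z‖^2 - s^2)/(2*G)) := this
          _ = D*(‖y-z‖^2 - s^2) := by rw [hD_def]; ring
      rw [hexp] at hmax h5
      simp only [hC_def]
      nlinarith [hmax, h5]
    set p := (2*C) • (ws - z) with hp_def
    have hpmem : p ∈ supDiff V v ws := by
      intro ε'' hε''
      have hC' : C ≤ (L+ε')/(2*δ) + M := by
        have h : (L+ε')/(2*G) ≤ (L+ε')/(2*δ) := by gcongr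
        simp only [hC_def, hD_def]; linarith
      have hCd : 0 < (L+ε')/(2*δ) + M := by positivity
      refine ⟨min (ε''/((L+ε')/(2*δ)+M)) (r - s), lt_min (div_pos hε'' hCd) (by linarith), ?_⟩
      intro y hyV hylt
      have hq1 : ‖y - ws‖ < r - s := lt_of_lt_of_le hylt (min_le_right _ _)
      have hyK : y ∈ K := by
        rw [hK_def, mem_closedBall_iff_norm]
        calc ‖y - z‖ ≤ ‖y - ws‖ + ‖ws - z‖ := norm_sub_le_norm_sub_add_norm_sub y ws z
          _ ≤ r := by rw [← hs_def]; linarith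
      have h6 := hkey2 y hyK
      rw [hp_def, real_inner_smul_left]
      have h8 : C * ‖y - ws‖ ≤ ε'' := by
        have h9 : ‖y - ws‖ ≤ ε''/((L+ε')/(2*δ)+M) := le_of_lt (lt_of_lt_of_le hylt (min_le_left _ _))
        calc C*‖y-ws‖ ≤ ((L+ε')/(2*δ)+M) * (ε''/((L+ε')/(2*δ)+M)) :=
              mul_le_mul hC' h9 (norm_nonneg _) hCd.le
          _ = ε'' := by field_simp
      nlinarith [norm_nonneg (y - ws), h6, h8]
    have hpL : ‖p‖ ≤ L := hbound ws (hKV hwK) p hpmem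
    have hpn : ‖p‖ = (2*C)*s := by
      rw [hp_def, norm_smul, Real.norm_eq_abs, abs_of_pos (by positivity), ← hs_def]
    have h9 : (L+ε')*s ≤ L*G := by
      have h10 : (L+ε')/G ≤ 2*C := by
        have : 2*C = (L+ε')/G + 2*M := by simp only [hC_def, hD_def]; ring
        rw [this]; linarith
      have h11 : ((L+ε')/G)*s ≤ L := by
        calc ((L+ε')/G)*s ≤ (2*C)*s := mul_le_mul_of_nonneg_right h10 hs0
          _ = ‖p‖ := hpn.symm
          _ ≤ L := hpL
      rw [div_mul_eq_mul_div, div_le_iff₀ hGpos] at h11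
      exact h11
    have hsc : s ≤ c*δ := by
      have hden : (0:ℝ) < 2*L*ε' + ε'^2 := by positivity
      have hG2 : G^2 = s^2+δ^2 := Real.sq_sqrt (by positivity)
      have h9' := mul_le_mul_of_nonneg_left h9 (mul_nonneg hLε.le hs0)
      have h11 : s^2 * (2*L*ε' + ε'^2) ≤ L^2*δ^2 := by nlinarith [h9, hG2, mul_le_mul h9 h9 (mul_nonneg hLε.le hs0) (mul_nonneg hL.le hGpos.le)]
      have hc2 : c^2 * (2*L*ε'+ε'^2) = L^2 := by
        rw [hc_def, div_pow, Real.sq_sqrt hden.le]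
        field_simp
      have h12 : s^2 ≤ (c*δ)^2 := by
        rw [mul_pow]
        nlinarith [h11, hc2]
      calc s = Real.sqrt (s^2) := (Real.sqrt_sq hs0).symm
        _ ≤ Real.sqrt ((c*δ)^2) := Real.sqrt_le_sqrt h12
        _ = c*δ := Real.sqrt_sq (by positivity)
    refine ⟨ws, hKV hwK, hsc, ?_⟩
    intro w hw
    have hmax := hwmax hw
    simp only [Set.mem_setOf_eq] at hmax
    rw [← hs_def, ← hG_def] at hmax
    have hGd : (L+ε')*δ ≤ (L+ε')*G := mul_le_mul_of_nonneg_left hGδ hLε.le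
    linarith [hmax, hGd, mul_nonneg hM.le (sq_nonneg s)]
  choose! w' hw'V hw'n hw'ineq using key
  refine ⟨min r (ε'/M), lt_min hr (by positivity), ?_⟩
  intro w hwV hwρ
  set d := ‖w - z‖ with hd_def
  have hd0 : 0 ≤ d := norm_nonneg _
  have hdr : d ≤ r := le_trans hwρ (min_le_left _ _)
  have hdM : d ≤ ε'/M := le_trans hwρ (min_le_right _ _)
  have hwK : w ∈ K := by rw [hK_def, mem_closedBall_iff_norm]; exact hdr
  have hev : ∀ᶠ δ in 𝓝[>] (0:ℝ), 0 < δ ∧ δ ≤ r := by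
    filter_upwards [Ioc_mem_nhdsGT_of_mem (show (0:ℝ) ∈ Ico (0:ℝ) r from ⟨le_refl _, hr⟩)]
      with δ hδ
    exact ⟨hδ.1, hδ.2⟩
  have hw'tends : Tendsto w' (𝓝[>] (0:ℝ)) (𝓝 z) := by
    rw [tendsto_iff_norm_sub_tendsto_zero]
    apply squeeze_zero'
    · exact Eventually.of_forall (fun δ => norm_nonneg _)
    · filter_upwards [hev] with δ hδ
      exact hw'n δ hδ.1 hδ.2
    · have h : Tendsto (fun δ : ℝ => c*δ) (𝓝 (0:ℝ)) (𝓝 (c*0)) :=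
        (continuous_const.mul continuous_id).tendsto 0
      rw [mul_zero] at h
      exact h.mono_left nhdsWithin_le_nhds
  have hvw' : Tendsto (fun δ => v (w' δ)) (𝓝[>] (0:ℝ)) (𝓝 (v z)) := by
    apply (hv z (subset_closure hz)).tendsto.comp
    rw [tendsto_nhdsWithin_iff]
    refine ⟨hw'tends, ?_⟩
    filter_upwards [hev] with δ hδ
    exact subset_closure (hw'V δ hδ.1 hδ.2)
  have hsqrtt : Tendsto (fun δ : ℝ => Real.sqrt (d^2+δ^2) - δ) (𝓝[>] (0:ℝ)) (𝓝 d) := by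
    have hcont2 : Continuous (fun δ : ℝ => Real.sqrt (d^2+δ^2) - δ) :=
      (Real.continuous_sqrt.comp (continuous_const.add (continuous_pow 2))).sub continuous_id
    have h := hcont2.tendsto 0
    simp only [ne_eq, OfNat.ofNat_ne_zero, not_false_eq_true, zero_pow, add_zero, sub_zero,
      Real.sqrt_sq hd0] at h
    exact h.mono_left nhdsWithin_le_nhds
  have htot : Tendsto (fun δ : ℝ => v (w' δ) + (L+ε')*(Real.sqrt (d^2+δ^2) - δ) + M*d^2)
      (𝓝[>] (0:ℝ)) (𝓝 (v z + (L+ε')*d + M*d^2)) :=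
    (hvw'.add (hsqrtt.const_mul _)).add tendsto_const_nhds
  have hle : v w ≤ v z + (L+ε')*d + M*d^2 := by
    apply ge_of_tendsto htot
    filter_upwards [hev] with δ hδ
    exact hw'ineq δ hδ.1 hδ.2 w hwK
  have hMd : M*d^2 ≤ ε'*d := by
    have h : M*d ≤ ε' := by
      calc M*d ≤ M*(ε'/M) := mul_le_mul_of_nonneg_left hdM hM.le
        _ = ε' := by field_simp
    nlinarith [hd0]
  have hfin : (L+ε')*d + ε'*d = (L+ε)*d := by rw [hε'_def]; ring
  linarith

set_option maxHeartbeats 1000000 in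
lemma onV {n : ℕ} {V : Set (En n)} (hVo : IsOpen V) (hVc : Convex ℝ V)
    {v : En n → ℝ} (hv : ContinuousOn v (closure V))
    {L : ℝ} (hL : 0 < L)
    (hbound : ∀ x ∈ V, ∀ p ∈ supDiff V v x, ‖p‖ ≤ L) :
    ∀ x ∈ V, ∀ y ∈ V, v y ≤ v x + L * ‖y - x‖ := by
  have main : ∀ ε > 0, ∀ x ∈ V, ∀ y ∈ V, v y ≤ v x + (L+ε) * (1 * ‖y - x‖) := by
    intro ε hε x hx y hy
    set γ : ℝ → En n := fun t => (1-t) • x + t • y with hγ_def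
    have hγmem : ∀ t ∈ Icc (0:ℝ) 1, γ t ∈ V := fun t ht =>
      hVc hx hy (by linarith [ht.2]) ht.1 (by ring)
    have hγ0 : γ 0 = x := by simp [hγ_def]
    have hγ1 : γ 1 = y := by simp [hγ_def]
    have hγdiff : ∀ a b : ℝ, γ b - γ a = (b - a) • (y - x) := by
      intro a b; simp only [hγ_def]; module
    set S : Set ℝ := {t | v (γ t) ≤ v x + (L+ε) * (t * ‖y - x‖)} with hS_def
    have h1 : Icc (0:ℝ) 1 ⊆ S := by
      apply IsClosed.Icc_subset_of_forall_exists_gt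
      · have hγcont : Continuous γ := by
          simp only [hγ_def]
          exact ((continuous_const.sub continuous_id).smul continuous_const).add
            (continuous_id.smul continuous_const)
        have hvγ : ContinuousOn (fun t => v (γ t)) (Icc (0:ℝ) 1) :=
          hv.comp hγcont.continuousOn (fun t ht => subset_closure (hγmem t ht))
        have hSeq : S ∩ Icc 0 1 =
            Icc (0:ℝ) 1 ∩ (fun t => v (γ t) - (v x + (L+ε)*(t*‖y-x‖)))⁻¹' (Iic 0) := by
          ext t
          simp only [hS_def, Set.mem_inter_iff, Set.mem_setOf_eq, Set.mem_preimage,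
            Set.mem_Iic, sub_nonpos]
          tauto
        rw [hSeq]
        exact (hvγ.sub (continuous_const.add
          (continuous_const.mul (continuous_id.mul continuous_const))).continuousOn
          ).preimage_isClosed_of_isClosed isClosed_Icc isClosed_Iic
      · simp [hS_def, hγ0]
      · intro t ht t' ht'
        have htS : t ∈ S := ht.1
        have ht0 : (0:ℝ) ≤ t := ht.2.1
        have ht1 : t < 1 := ht.2.2
        have hzV : γ t ∈ V := hγmem t ⟨ht0, ht1.le⟩
        obtain ⟨ρ, hρ, hloc⟩ := local_est hVo hv hL hbound hzV hε
        have hny : (0:ℝ) < ‖y-x‖+1 := by positivity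
        set t'' := min t' (min 1 (t + ρ/(‖y-x‖+1))) with ht''_def
        have htt'' : t < t'' := by
          apply lt_min ht'
          apply lt_min ht1
          have h2 : 0 < ρ/(‖y-x‖+1) := by positivity
          linarith
        have ht''1 : t'' ≤ 1 := le_trans (min_le_right _ _) (min_le_left _ _)
        have ht''ρ : t'' ≤ t + ρ/(‖y-x‖+1) :=
          le_trans (min_le_right _ _) (min_le_right _ _)
        have hwV : γ t'' ∈ V := hγmem t'' ⟨le_trans ht0 htt''.le, ht''1⟩
        have hnorm : ‖γ t'' - γ t‖ = (t''-t)*‖y-x‖ := by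
          rw [hγdiff t t'', norm_smul, Real.norm_eq_abs, abs_of_nonneg (by linarith)]
        have hlee : ‖γ t'' - γ t‖ ≤ ρ := by
          rw [hnorm]
          calc (t''-t)*‖y-x‖ ≤ ρ/(‖y-x‖+1)*‖y-x‖ :=
                mul_le_mul_of_nonneg_right (by linarith) (norm_nonneg _)
            _ ≤ ρ := by
                rw [div_mul_eq_mul_div, div_le_iff₀ hny]
                nlinarith [norm_nonneg (y-x), hρ]
        have h3 := hloc (γ t'') hwV hlee
        rw [hnorm] at h3
        have ht''S : t'' ∈ S := by
          simp only [hS_def, Set.mem_setOf_eq] at htS ⊢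
          nlinarith [h3, htS]
        exact ⟨t'', ht''S, htt'', min_le_left _ _⟩
    have h2 := h1 (right_mem_Icc.2 zero_le_one)
    simp only [hS_def, Set.mem_setOf_eq, hγ1, one_mul] at h2
    linarith [h2]
  intro x hx y hy
  by_cases hxy : x = y
  · subst hxy; simp
  · by_contra hcon
    push_neg at hcon
    have hn : 0 < ‖y - x‖ := by
      rw [norm_pos_iff, sub_ne_zero]
      exact fun h => hxy h.symm
    set ε := (v y - v x - L*‖y-x‖)/‖y-x‖ with hε_def
    have hε : 0 < ε := div_pos (by linarith) hn
    have h2 := main (ε/2) (by positivity) x hx y hy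
    rw [one_mul, hε_def] at h2
    have h3 : (L + (v y - v x - L*‖y-x‖)/‖y-x‖/2) * ‖y-x‖
        = L*‖y-x‖ + (v y - v x - L*‖y-x‖)/2 := by
      field_simp
    rw [h3] at h2
    linarith


/-- a continuous function on the closure of an open convex set whose
superdifferentials are bounded by `L` is Lipschitz with constant `L`. -/
theorem lipschitz_of_supDiff_bounded
    {n : ℕ} (V : Set (En n)) (hVo : IsOpen V) (hVc : Convex ℝ V)
    (v : En n → ℝ) (hv : ContinuousOn v (closure V))
    (L : ℝ) (hL : 0 < L)
    (hbound : ∀ x ∈ V, ∀ p ∈ supDiff V v x, ‖p‖ ≤ L) :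
    ∀ x ∈ closure V, ∀ y ∈ closure V, |v x - v y| ≤ L * ‖x - y‖ := by
  have key : ∀ a ∈ closure V, ∀ b ∈ closure V, v b ≤ v a + L * ‖b - a‖ := by
    intro a ha b hb
    obtain ⟨ua, huaV, huat⟩ := mem_closure_iff_seq_limit.1 ha
    obtain ⟨ub, hubV, hubt⟩ := mem_closure_iff_seq_limit.1 hb
    have h1 : ∀ k, v (ub k) ≤ v (ua k) + L * ‖ub k - ua k‖ := fun k =>
      onV hVo hVc hv hL hbound (ua k) (huaV k) (ub k) (hubV k)
    have hta : Tendsto (fun k => v (ua k)) atTop (𝓝 (v a)) :=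
      (hv a ha).tendsto.comp (tendsto_nhdsWithin_iff.2
        ⟨huat, Eventually.of_forall (fun k => subset_closure (huaV k))⟩)
    have htb : Tendsto (fun k => v (ub k)) atTop (𝓝 (v b)) :=
      (hv b hb).tendsto.comp (tendsto_nhdsWithin_iff.2
        ⟨hubt, Eventually.of_forall (fun k => subset_closure (hubV k))⟩)
    have htn : Tendsto (fun k => ‖ub k - ua k‖) atTop (𝓝 ‖b - a‖) := (hubt.sub huat).norm
    exact le_of_tendsto_of_tendsto' htb (hta.add (htn.const_mul L)) h1
  intro x hx y hy
  rw [abs_sub_le_iff]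
  constructor
  · have h := key y hy x hx
    linarith
  · have h := key x hx y hy
    rw [norm_sub_rev y x] at h
    linarith
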